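/- arXiv:2311.16587 — 5 statements merged into one kernel-verified Lean document; each statement's English description precedes it below -/
import Mathlib

section
/- Let k, d ≥ 1 and ε ≥ 0. Let w : F_2^k → F_2^d be any function (F_2 is the field with two elements). If, for independent uniformly random a, b ∈ F_2^k, Pr[w(a) + w(b) = w(a+b)] ≥ 1 − ε, then there exists a matrix A ∈ F_2^{d×k} such that the fraction of points b ∈ F_2^k with w(b) ≠ A·b is at most 6ε. -/
/-!
Self-correction. Let `δ` be the fraction of pairs failing the test, and let `g x` be the most
frequent value of `y ↦ w (x + y) - w y`. Two of these values, at `y₁` and `y₂`, agree unless the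
test fails at `(x + y₁, y₂)` or at `(x + y₂, y₁)`; so they disagree on at most a `2δ` fraction of
pairs, and `g x` is taken by all but a `2δ` fraction of the `y`. If `δ < 1/6`, then for any
`x₁, x₂` a single `y` realises `g x₁ = w (x₁ + y) - w y`, `g x₂ = w (x₁ + x₂ + y) - w (x₁ + y)`
and `g (x₁ + x₂) = w (x₁ + x₂ + y) - w y` at once, so `g` is additive. Where `w x ≠ g x`, the
test fails at `(x, y)` for more than two thirds of the `y`, so `w` and `g` differ on at most a
`3δ/2` fraction of points. Over `F₂` additive maps are linear, hence given by matrices; and when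
`6ε ≥ 1` any matrix will do.
-/

open scoped Classical

noncomputable def prob {Ω : Type*} [Fintype Ω] (P : Ω → Prop) : ℝ :=
  ((Finset.univ.filter P).card : ℝ) / (Fintype.card Ω : ℝ)

noncomputable def rdist {A B : Type*} [Fintype A] (f g : A → B) : ℝ :=
  prob (fun a => f a ≠ g a)

open Finset

section Prob

variable {Ω : Type*} [Fintype Ω]

lemma prob_nonneg (P : Ω → Prop) : 0 ≤ prob P := by
  unfold prob; positivity

lemma prob_le_one (P : Ω → Prop) : prob P ≤ 1 :=
  div_le_one_of_le₀ (mod_cast card_le_univ _) (Nat.cast_nonneg _)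

lemma prob_not [Nonempty Ω] (P : Ω → Prop) : prob (fun x => ¬P x) = 1 - prob P := by
  have hsplit := card_filter_add_card_filter_not (s := univ) P
  rw [card_univ] at hsplit
  have hN : (Fintype.card Ω : ℝ) ≠ 0 := Nat.cast_ne_zero.2 Fintype.card_ne_zero
  rw [prob, prob, eq_sub_iff_add_eq, ← add_div, div_eq_one_iff_eq hN]
  norm_cast
  convert (add_comm _ _).trans hsplit

lemma rdist_eq_card_div {α β : Type*} [Fintype α] (f g : α → β) :
    rdist f g = #{a | f a ≠ g a} / (Fintype.card α : ℝ) := by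
  rw [rdist, prob]
  congr

end Prob

lemma card_filter_prod_eq_sum {α γ : Type*} [Fintype α] [Fintype γ] (p : α → γ → Prop)
    [∀ a c, Decidable (p a c)] :
    #{x : α × γ | p x.1 x.2} = ∑ a, #{c | p a c} := by
  simp only [card_filter, Fintype.sum_prod_type]

lemma card_filter_comp_equiv {α β : Type*} [Fintype α] [Fintype β] (e : α ≃ β) (p : β → Prop)
    [DecidablePred p] :
    #{a | p (e a)} = #{b | p b} :=
  card_equiv e fun a => by simp only [mem_filter, mem_univ, true_and]

section Plurality

variable {α β : Type*} [Fintype α] [Nonempty α]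

noncomputable def plurality (f : α → β) : β :=
  f (exists_max_image univ (fun a => #{b | f b = f a}) univ_nonempty).choose

lemma card_fiber_le_card_fiber_plurality (f : α → β) (a : α) :
    #{b | f b = f a} ≤ #{b | f b = plurality f} :=
  (exists_max_image univ (fun a => #{b | f b = f a}) univ_nonempty).choose_spec.2 a (mem_univ a)

lemma card_collisions_le_card_mul_card_fiber_plurality (f : α → β) :
    #{x : α × α | f x.1 = f x.2} ≤ Fintype.card α * #{b | f b = plurality f} := by
  rw [card_filter_prod_eq_sum (fun a b => f a = f b), ← smul_eq_mul, ← card_univ]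
  refine sum_le_card_nsmul _ _ _ fun a _ => ?_
  simpa only [eq_comm] using card_fiber_le_card_fiber_plurality f a

lemma card_mul_card_ne_plurality_le (f : α → β) :
    Fintype.card α * #{b | f b ≠ plurality f} ≤ #{x : α × α | f x.1 ≠ f x.2} := by
  have hfib := card_filter_add_card_filter_not (s := univ) fun b => f b = plurality f
  have hpairs := card_filter_add_card_filter_not (s := univ) fun x : α × α => f x.1 = f x.2
  rw [card_univ, Fintype.card_prod] at hpairs
  rw [card_univ] at hfib
  have := card_collisions_le_card_mul_card_fiber_plurality f
  nlinarith

end Plurality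

section BLR

variable {G H : Type*} [AddCommGroup G] [Fintype G] [AddCommGroup H]

noncomputable def blrFailures (w : G → H) : Finset (G × G) :=
  {x | w x.1 + w x.2 ≠ w (x.1 + x.2)}

noncomputable def selfCorrect (w : G → H) (x : G) : H := plurality fun y => w (x + y) - w y

lemma card_translate_sub_ne_le (w : G → H) (x : G) :
    #{y : G × G | w (x + y.1) - w y.1 ≠ w (x + y.2) - w y.2} ≤ 2 * #(blrFailures w) := by
  let e₁ : G × G ≃ G × G := (Equiv.addLeft x).prodCongr (Equiv.refl G)
  let e₂ : G × G ≃ G × G := (Equiv.prodComm G G).trans e₁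
  calc _ ≤ #((blrFailures w).map e₁.symm.toEmbedding ∪
            (blrFailures w).map e₂.symm.toEmbedding) := by
        refine card_le_card fun y => ?_
        simp only [blrFailures, mem_union, mem_map_equiv, Equiv.symm_symm, mem_filter, mem_univ,
          true_and]
        -- if the test passes at `(x + y₁, y₂)` and `(x + y₂, y₁)`, both differences equal
        -- `w (x + y₁ + y₂) - w y₁ - w y₂`
        contrapose!
        rintro ⟨h₁, h₂⟩
        simp only [e₁, e₂, Equiv.trans_apply, Equiv.prodComm_apply, Prod.fst_swap, Prod.snd_swap,
          Equiv.prodCongr_apply, Prod.map, Equiv.coe_addLeft, Equiv.refl_apply] at h₁ h₂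
        rw [eq_sub_of_add_eq h₁, eq_sub_of_add_eq h₂, add_right_comm x y.2 y.1]
        abel
    _ ≤ _ := card_union_le _ _
    _ = 2 * #(blrFailures w) := by rw [card_map, card_map, two_mul]

lemma card_mul_card_ne_selfCorrect_le (w : G → H) (x : G) :
    Fintype.card G * #{y | w (x + y) - w y ≠ selfCorrect w x} ≤ 2 * #(blrFailures w) :=
  (card_mul_card_ne_plurality_le _).trans (card_translate_sub_ne_le w x)

lemma selfCorrect_add (w : G → H) (h : 6 * #(blrFailures w) < Fintype.card G ^ 2) (x₁ x₂ : G) :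
    selfCorrect w (x₁ + x₂) = selfCorrect w x₁ + selfCorrect w x₂ := by
  set N := Fintype.card G
  let s₁ : Finset G := {y | w (x₁ + y) - w y ≠ selfCorrect w x₁}
  let s₂ : Finset G := {y | w (x₂ + (x₁ + y)) - w (x₁ + y) ≠ selfCorrect w x₂}
  let s₃ : Finset G := {y | w (x₁ + x₂ + y) - w y ≠ selfCorrect w (x₁ + x₂)}
  have hs₂ : #s₂ = #{y | w (x₂ + y) - w y ≠ selfCorrect w x₂} :=
    card_filter_comp_equiv (Equiv.addLeft x₁) fun y => w (x₂ + y) - w y ≠ selfCorrect w x₂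
  have hbad₁ := card_mul_card_ne_selfCorrect_le w x₁
  have hbad₂ := card_mul_card_ne_selfCorrect_le w x₂
  have hbad₃ := card_mul_card_ne_selfCorrect_le w (x₁ + x₂)
  -- each `sᵢ` has fewer than `N / 3` elements, so some `y` lies in none of them
  have hunion : #(s₁ ∪ s₂ ∪ s₃) < #(univ : Finset G) := by
    have := (card_union_le (s₁ ∪ s₂) s₃).trans (Nat.add_le_add_right (card_union_le s₁ s₂) _)
    rw [card_univ]
    refine Nat.lt_of_mul_lt_mul_left (a := N) ?_
    nlinarith
  obtain ⟨y, -, hy⟩ := exists_mem_notMem_of_card_lt_card hunion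
  simp only [s₁, s₂, s₃, mem_union, mem_filter, mem_univ, true_and, not_or, not_not] at hy
  obtain ⟨⟨h₁, h₂⟩, h₃⟩ := hy
  rw [← h₁, ← h₂, ← h₃, ← add_assoc, add_comm x₂ x₁]
  abel

lemma two_mul_card_lt_three_mul_card_failures_of_ne (w : G → H)
    (h : 6 * #(blrFailures w) < Fintype.card G ^ 2) {x : G} (hx : w x ≠ selfCorrect w x) :
    2 * Fintype.card G < 3 * #{y | (x, y) ∈ blrFailures w} := by
  have hpass : #{y | (x, y) ∉ blrFailures w} ≤ #{y | w (x + y) - w y ≠ selfCorrect w x} := by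
    refine card_le_card fun y => ?_
    simp only [blrFailures, mem_filter, mem_univ, true_and, not_not]
    intro hxy
    rwa [← hxy, add_sub_cancel_right]
  have hbad := card_mul_card_ne_selfCorrect_le w x
  have hsplit := card_filter_add_card_filter_not (s := univ) fun y => (x, y) ∈ blrFailures w
  rw [card_univ] at hsplit
  have : 3 * #{y | w (x + y) - w y ≠ selfCorrect w x} < Fintype.card G :=
    Nat.lt_of_mul_lt_mul_left (a := Fintype.card G) (by nlinarith)
  omega

lemma two_mul_card_mul_card_ne_selfCorrect_le (w : G → H)
    (h : 6 * #(blrFailures w) < Fintype.card G ^ 2) :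
    2 * Fintype.card G * #{x | w x ≠ selfCorrect w x} ≤ 3 * #(blrFailures w) := by
  have hfibers : #(blrFailures w) = ∑ x, #{y | (x, y) ∈ blrFailures w} := by
    simpa only [Prod.mk.eta, filter_mem_eq_inter, univ_inter] using
      card_filter_prod_eq_sum fun x y => (x, y) ∈ blrFailures w
  calc 2 * Fintype.card G * #{x | w x ≠ selfCorrect w x}
      = ∑ x ∈ {x | w x ≠ selfCorrect w x}, 2 * Fintype.card G := by
        rw [sum_const, smul_eq_mul, mul_comm]
    _ ≤ ∑ x ∈ {x | w x ≠ selfCorrect w x}, 3 * #{y | (x, y) ∈ blrFailures w} :=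
      sum_le_sum fun x hx =>
        (two_mul_card_lt_three_mul_card_failures_of_ne w h (mem_filter.1 hx).2).le
    _ ≤ ∑ x, 3 * #{y | (x, y) ∈ blrFailures w} :=
      sum_le_univ_sum_of_nonneg fun _ => Nat.zero_le _
    _ = 3 * #(blrFailures w) := by rw [← mul_sum, hfibers]

lemma prob_blr_fail_eq_card_blrFailures_div (w : G → H) :
    prob (fun x : G × G => w x.1 + w x.2 ≠ w (x.1 + x.2))
      = #(blrFailures w) / (Fintype.card G : ℝ) ^ 2 := by
  rw [prob, Fintype.card_prod, Nat.cast_mul, sq, blrFailures]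
  congr

theorem exists_addMonoidHom_rdist_le (w : G → H)
    (h : 6 * prob (fun x : G × G => w x.1 + w x.2 ≠ w (x.1 + x.2)) < 1) :
    ∃ g : G →+ H, rdist w g ≤ 3 / 2 * prob (fun x : G × G => w x.1 + w x.2 ≠ w (x.1 + x.2)) := by
  have hN : (0 : ℝ) < Fintype.card G := Nat.cast_pos.2 Fintype.card_pos
  rw [prob_blr_fail_eq_card_blrFailures_div, mul_div_assoc', div_lt_one (by positivity)] at h
  have h' : 6 * #(blrFailures w) < Fintype.card G ^ 2 := by exact_mod_cast h
  refine ⟨AddMonoidHom.mk' (selfCorrect w) (selfCorrect_add w h'), ?_⟩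
  have key : (2 * Fintype.card G * #{x | w x ≠ selfCorrect w x} : ℝ) ≤ 3 * #(blrFailures w) :=
    mod_cast two_mul_card_mul_card_ne_selfCorrect_le w h'
  rw [prob_blr_fail_eq_card_blrFailures_div, rdist_eq_card_div, AddMonoidHom.mk'_apply,
    div_le_iff₀ hN]
  field_simp
  linarith

end BLR

theorem blr_soundness_F2_general {k d : ℕ} {ε : ℝ}
    (w : (Fin k → ZMod 2) → (Fin d → ZMod 2))
    (h : prob (fun x : (Fin k → ZMod 2) × (Fin k → ZMod 2) =>
        w x.1 + w x.2 = w (x.1 + x.2)) ≥ 1 - ε) :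
    ∃ A : Matrix (Fin d) (Fin k) (ZMod 2),
      rdist w (fun b => A.mulVec b) ≤ 6 * ε := by
  have hfail : prob (fun x : (Fin k → ZMod 2) × (Fin k → ZMod 2) =>
      w x.1 + w x.2 ≠ w (x.1 + x.2)) ≤ ε := by
    rw [prob_not]; linarith
  by_cases htrivial : 1 ≤ 6 * ε
  · exact ⟨0, (prob_le_one _).trans htrivial⟩
  obtain ⟨g, hg⟩ := exists_addMonoidHom_rdist_le w (by linarith)
  refine ⟨LinearMap.toMatrix' (g.toZModLinearMap 2), ?_⟩
  simp only [LinearMap.toMatrix'_mulVec, AddMonoidHom.coe_toZModLinearMap]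
  linarith [prob_nonneg (fun x : (Fin k → ZMod 2) × (Fin k → ZMod 2) =>
      w x.1 + w x.2 ≠ w (x.1 + x.2))]

/-- **BLR linearity test soundness for the parallel Walsh–Hadamard code over `F₂`**
(Theorem 2): if `w : F₂^k → F₂^d` passes the BLR test with probability at least
`1 - ε`, then `w` is `6ε`-close to a codeword `b ↦ A·b` for some matrix
`A ∈ F₂^{d×k}`. -/
theorem blr_soundness_F2 {k d : ℕ} (hk : 1 ≤ k) (hd : 1 ≤ d) {ε : ℝ} (hε : 0 ≤ ε)
    (w : (Fin k → ZMod 2) → (Fin d → ZMod 2))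
    (h : prob (fun x : (Fin k → ZMod 2) × (Fin k → ZMod 2) =>
        w x.1 + w x.2 = w (x.1 + x.2)) ≥ 1 - ε) :
    ∃ A : Matrix (Fin d) (Fin k) (ZMod 2),
      rdist w (fun b => A.mulVec b) ≤ 6 * ε :=
  blr_soundness_F2_general w h
end

section
/- Let a vector-valued CSP instance with only linear constraints be given, and let σ : Fin k → (Fin d → F) be a solution, i.e., σ(u(e)) = M_e · σ(v(e)) for all e ∈ Fin m. Define z : Fin k × Fin m → (Fin d → F) by z(p,e) = M_e · σ(p), let π1 = PWH(σ) and let π2 be the parallel Walsh–Hadamard encoding of z (viewed as a tuple of k·m vectors in F^d). Then: (i) π1(a1) + π1(a2) = π1(a1 + a2) for all a1, a2 ∈ F^k, and π2(b1) + π2(b2) = π2(b1 + b2) for all b1, b2 ∈ F^{k·m}; (ii) for all λ, a ∈ F^k, μ ∈ F^m, and b ∈ F^{k·m}: π2(b+γ) − π2(b) = M0 · (π1(a+λ) − π1(a)), where γ(p,e) = λ_p·μ_e and M0 = Σ_e μ_e·M_e; (iii) for all μ ∈ F^m, a ∈ F^k, and b ∈ F^{k·m}: π2(b+γ') − π2(b)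 = π1(a+λ') − π1(a), where λ'_p = Σ_{e : u(e)=p} μ_e and γ'(p,e) = μ_e if v(e)=p and 0 otherwise. Consequently p1 = p2 = p3 = p4 = 1, i.e., the parallel PCPP verifier for linear constraints accepts the proof π1 ∘ π2 with probability 1. -/
open scoped Classical

/-- The parallel Walsh–Hadamard encoding of an assignment `σ : ι → (Fin d → F)`:
`PWH σ b = ∑ i, b i • σ i`, as a function from `ι → F` to `Fin d → F`. -/
def PWH {F : Type*} [CommRing F] {ι : Type*} [Fintype ι] {d : ℕ}
    (σ : ι → Fin d → F) : (ι → F) → (Fin d → F) :=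
  fun b j => ∑ i, b i * σ i j

lemma prob_of_forall {Ω : Type*} [Fintype Ω] [Nonempty Ω] (P : Ω → Prop)
    (h : ∀ x, P x) : prob P = 1 := by
  unfold prob
  rw [Finset.filter_true_of_mem (fun x _ => h x)]
  simp [Finset.card_univ, Fintype.card_ne_zero]

lemma PWH_add {F : Type*} [CommRing F] {ι : Type*} [Fintype ι] {d : ℕ}
    (σ : ι → Fin d → F) (a b : ι → F) :
    PWH σ a + PWH σ b = PWH σ (a + b) := by
  funext j
  simp [PWH, add_mul, Finset.sum_add_distrib]

/-- **Completeness of the parallel PCPP for linear constraints** (Lemma 6.2).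
Given a vector-valued CSP instance with only linear constraints (head `u e`,
tail `v e`, matrix `M e`), a solution `σ`, the auxiliary assignment
`z (p, e) = M e · σ p`, and the honest proofs `π1 = PWH σ`, `π2 = PWH z`,
all four tests of the verifier pass for every choice of randomness, and hence
each of the four acceptance probabilities `p1, p2, p3, p4` equals `1`. -/
theorem linear_pcpp_completeness {F : Type*} [Field F] [Fintype F] [CharP F 2]
    {k m d : ℕ} (hk : 1 ≤ k) (hm : 1 ≤ m) (hd : 1 ≤ d)
    (u v : Fin m → Fin k) (M : Fin m → Matrix (Fin d) (Fin d) F)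
    (σ : Fin k → Fin d → F)
    (hσ : ∀ e : Fin m, σ (u e) = (M e).mulVec (σ (v e)))
    (z : Fin k × Fin m → Fin d → F)
    (hz : ∀ (p : Fin k) (e : Fin m), z (p, e) = (M e).mulVec (σ p))
    (π1 : (Fin k → F) → (Fin d → F)) (hπ1 : π1 = PWH σ)
    (π2 : (Fin k × Fin m → F) → (Fin d → F)) (hπ2 : π2 = PWH z) :
    -- (i) linearity of both proofs
    (∀ a1 a2 : Fin k → F, π1 a1 + π1 a2 = π1 (a1 + a2)) ∧
    (∀ b1 b2 : Fin k × Fin m → F, π2 b1 + π2 b2 = π2 (b1 + b2)) ∧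
    -- (ii) the matrix test passes for every choice of randomness
    (∀ (lam a : Fin k → F) (μ : Fin m → F) (b : Fin k × Fin m → F),
      π2 (b + fun pe : Fin k × Fin m => lam pe.1 * μ pe.2) - π2 b
        = (∑ e : Fin m, μ e • M e).mulVec (π1 (a + lam) - π1 a)) ∧
    -- (iii) the constraint test passes for every choice of randomness
    (∀ (μ : Fin m → F) (a : Fin k → F) (b : Fin k × Fin m → F),
      π2 (b + fun pe : Fin k × Fin m => if v pe.2 = pe.1 then μ pe.2 else 0) - π2 b
        = π1 (a + fun p : Fin k =>
            ∑ e ∈ Finset.univ.filter (fun e : Fin m => u e = p), μ e) - π1 a) ∧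
    -- consequently all four acceptance probabilities are 1
    prob (fun x : (Fin k → F) × (Fin k → F) =>
        π1 x.1 + π1 x.2 = π1 (x.1 + x.2)) = 1 ∧
    prob (fun x : (Fin k × Fin m → F) × (Fin k × Fin m → F) =>
        π2 x.1 + π2 x.2 = π2 (x.1 + x.2)) = 1 ∧
    prob (fun x : (Fin k → F) × (Fin k → F) × (Fin m → F) × (Fin k × Fin m → F) =>
        π2 (x.2.2.2 + fun pe : Fin k × Fin m => x.1 pe.1 * x.2.2.1 pe.2) - π2 x.2.2.2
          = (∑ e : Fin m, x.2.2.1 e • M e).mulVec (π1 (x.2.1 + x.1) - π1 x.2.1)) = 1 ∧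
    prob (fun x : (Fin m → F) × (Fin k → F) × (Fin k × Fin m → F) =>
        π2 (x.2.2 + fun pe : Fin k × Fin m => if v pe.2 = pe.1 then x.1 pe.2 else 0)
            - π2 x.2.2
          = π1 (x.2.1 + fun p : Fin k =>
              ∑ e ∈ Finset.univ.filter (fun e : Fin m => u e = p), x.1 e) - π1 x.2.1) = 1 := by
  subst hπ1 hπ2
  have lin1 : ∀ a1 a2 : Fin k → F, PWH σ a1 + PWH σ a2 = PWH σ (a1 + a2) :=
    PWH_add σ
  have lin2 : ∀ b1 b2 : Fin k × Fin m → F, PWH z b1 + PWH z b2 = PWH z (b1 + b2) :=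
    PWH_add z
  have diff1 : ∀ a lam : Fin k → F, PWH σ (a + lam) - PWH σ a = PWH σ lam := by
    intro a lam
    rw [← lin1 a lam]; abel
  have diff2 : ∀ b g : Fin k × Fin m → F, PWH z (b + g) - PWH z b = PWH z g := by
    intro b g
    rw [← lin2 b g]; abel
  have test2 : ∀ (lam a : Fin k → F) (μ : Fin m → F) (b : Fin k × Fin m → F),
      PWH z (b + fun pe : Fin k × Fin m => lam pe.1 * μ pe.2) - PWH z b
        = (∑ e : Fin m, μ e • M e).mulVec (PWH σ (a + lam) - PWH σ a) := by
    intro lam a μ b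
    rw [diff2, diff1]
    funext j
    have L : PWH z (fun pe : Fin k × Fin m => lam pe.1 * μ pe.2) j
        = ∑ e : Fin m, ∑ p : Fin k, ∑ l : Fin d, μ e * lam p * (M e j l * σ p l) := by
      calc PWH z (fun pe : Fin k × Fin m => lam pe.1 * μ pe.2) j
          = ∑ p : Fin k, ∑ e : Fin m, ∑ l : Fin d, μ e * lam p * (M e j l * σ p l) := by
            simp only [PWH, Fintype.sum_prod_type]
            refine Finset.sum_congr rfl fun p _ => Finset.sum_congr rfl fun e _ => ?_
            rw [hz]
            simp only [Matrix.mulVec, dotProduct, Finset.mul_sum]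
            exact Finset.sum_congr rfl fun l _ => by ring
        _ = _ := Finset.sum_comm
    have R : (∑ e : Fin m, μ e • M e).mulVec (PWH σ lam) j
        = ∑ e : Fin m, ∑ p : Fin k, ∑ l : Fin d, μ e * lam p * (M e j l * σ p l) := by
      calc (∑ e : Fin m, μ e • M e).mulVec (PWH σ lam) j
          = ∑ l : Fin d, ∑ e : Fin m, ∑ p : Fin k, μ e * lam p * (M e j l * σ p l) := by
            simp only [Matrix.mulVec, dotProduct, Matrix.sum_apply,
              Matrix.smul_apply, smul_eq_mul, PWH]
            refine Finset.sum_congr rfl fun l _ => ?_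
            rw [Finset.sum_mul]
            refine Finset.sum_congr rfl fun e _ => ?_
            rw [Finset.mul_sum]
            exact Finset.sum_congr rfl fun p _ => by ring
        _ = ∑ e : Fin m, ∑ l : Fin d, ∑ p : Fin k, μ e * lam p * (M e j l * σ p l) :=
            Finset.sum_comm
        _ = _ := Finset.sum_congr rfl fun e _ => Finset.sum_comm
    rw [L, R]
  have test3 : ∀ (μ : Fin m → F) (a : Fin k → F) (b : Fin k × Fin m → F),
      PWH z (b + fun pe : Fin k × Fin m => if v pe.2 = pe.1 then μ pe.2 else 0)
          - PWH z b
        = PWH σ (a + fun p : Fin k =>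
            ∑ e ∈ Finset.univ.filter (fun e : Fin m => u e = p), μ e) - PWH σ a := by
    intro μ a b
    rw [diff2, diff1]
    funext j
    have L : PWH z (fun pe : Fin k × Fin m => if v pe.2 = pe.1 then μ pe.2 else 0) j
        = ∑ e : Fin m, μ e * σ (u e) j := by
      simp only [PWH, Fintype.sum_prod_type, ite_mul, zero_mul]
      rw [Finset.sum_comm]
      refine Finset.sum_congr rfl fun e _ => ?_
      rw [Finset.sum_ite_eq Finset.univ (v e) (fun p => μ e * z (p, e) j)]
      simp [hz, hσ e]
    have R : PWH σ (fun p : Fin k =>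
          ∑ e ∈ Finset.univ.filter (fun e : Fin m => u e = p), μ e) j
        = ∑ e : Fin m, μ e * σ (u e) j := by
      simp only [PWH, Finset.sum_mul]
      rw [← Finset.sum_fiberwise Finset.univ u (fun e => μ e * σ (u e) j)]
      refine Finset.sum_congr rfl fun p _ => Finset.sum_congr rfl fun e he => ?_
      simp only [Finset.mem_filter] at he
      rw [he.2]
    rw [L, R]
  refine ⟨lin1, lin2, test2, test3, ?_, ?_, ?_, ?_⟩
  · exact prob_of_forall _ fun x => lin1 x.1 x.2
  · exact prob_of_forall _ fun x => lin2 x.1 x.2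
  · exact prob_of_forall _ fun x => test2 x.1 x.2.1 x.2.2.1 x.2.2.2
  · exact prob_of_forall _ fun x => test3 x.1 x.2.1 x.2.2
end

section
/- Let c ≥ 1, let u ∈ F_2^c be a vector and W ∈ F_2^{c×c} a matrix with W ≠ u·u^⊤. If r, r' ∈ F_2^c are drawn independently and uniformly at random, then Pr[r^⊤ W r' ≠ (r^⊤ u)·(r'^⊤ u)] ≥ 1/4. -/
open scoped Classical

/-!
Write `M = W - u uᵀ ≠ 0`; the test rejects exactly when `rᵀ M r' ≠ 0`. By the random subsum
principle, a nonzero additive map on a finite group is nonzero on at least half of it (translating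
by a point outside the kernel injects the kernel into its complement). Hence `rᵀ M ≠ 0` with
probability at least `1/2`, and for each such `r`, `(rᵀ M) r' ≠ 0` with probability at least `1/2`.
-/

open Finset Matrix

theorem card_le_two_mul_card_ne_zero {G H : Type*} [AddGroup G] [Fintype G] [AddZeroClass H]
    (φ : G →+ H) (hφ : φ ≠ 0) : Fintype.card G ≤ 2 * #{x | φ x ≠ 0} := by
  obtain ⟨x₀, hx₀⟩ := DFunLike.ne_iff.mp hφ
  have hker : #{x | φ x = 0} ≤ #{x | φ x ≠ 0} := by
    refine card_le_card_of_injOn (· + x₀) (fun x hx => ?_) (fun x _ y _ => add_right_cancel)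
    simp only [coe_filter, mem_univ, true_and, Set.mem_ofPred_eq] at hx ⊢
    rwa [map_add, hx, zero_add]
  have htotal := card_filter_add_card_filter_not (s := univ) (fun x => φ x = 0)
  simp only [card_univ, ← ne_eq] at htotal hker ⊢
  omega

theorem half_le_prob_ne_zero {G H : Type*} [AddGroup G] [Fintype G] [AddZeroClass H]
    (φ : G →+ H) (hφ : φ ≠ 0) : 1 / 2 ≤ prob (fun x => φ x ≠ 0) := by
  have hcard : (Fintype.card G : ℝ) ≤ 2 * #{x | φ x ≠ 0} := by
    exact_mod_cast card_le_two_mul_card_ne_zero φ hφ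
  rw [prob, filter_congr_decidable, le_div_iff₀ (by exact_mod_cast Fintype.card_pos)]
  linarith

theorem prob_prod {α β : Type*} [Fintype α] [Fintype β] (Q : α → β → Prop) :
    prob (fun p : α × β => Q p.1 p.2) = (∑ a, prob (Q a)) / Fintype.card α := by
  simp only [prob, card_filter, Fintype.sum_prod_type, Fintype.card_prod, Nat.cast_sum,
    Nat.cast_mul, ← sum_div]
  rw [div_div, mul_comm]

theorem mul_le_prob_prod {α β : Type*} [Fintype α] [Fintype β] [Nonempty α]
    {P : α → Prop} {Q : α → β → Prop} {a b : ℝ} (ha : a ≤ prob P) (hb₀ : 0 ≤ b)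
    (hb : ∀ x, P x → b ≤ prob (Q x)) : a * b ≤ prob (fun p : α × β => Q p.1 p.2) := by
  have hsum : #{x | P x} * b ≤ ∑ x, prob (Q x) :=
    calc #{x | P x} * b = ∑ x ∈ {x | P x}, b := by simp
      _ ≤ ∑ x ∈ {x | P x}, prob (Q x) := sum_le_sum fun x hx => hb x (by simpa using hx)
      _ ≤ ∑ x, prob (Q x) :=
          sum_le_sum_of_subset_of_nonneg (filter_subset _ _) fun x _ _ => by
            unfold prob; positivity
  rw [prob_prod, le_div_iff₀ (by exact_mod_cast Fintype.card_pos)]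
  calc a * b * Fintype.card α ≤ prob P * b * Fintype.card α := by gcongr
    _ = #{x | P x} * b := by
        rw [prob]; field_simp
    _ ≤ ∑ x, prob (Q x) := hsum

theorem quarter_le_prob_vecMul_dotProduct_ne_zero {m n R : Type*} [Fintype m] [Fintype n]
    [DecidableEq m] [DecidableEq n] [Ring R] [Fintype R] {M : Matrix m n R} (hM : M ≠ 0) :
    1 / 4 ≤ prob (fun p : (m → R) × (n → R) => p.1 ᵥ* M ⬝ᵥ p.2 ≠ 0) := by
  obtain ⟨i, hi⟩ : ∃ i, M.row i ≠ 0 := by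
    by_contra! h
    exact hM (funext h)
  have hrow : (vecMulLinear M).toAddMonoidHom ≠ 0 :=
    DFunLike.ne_iff.mpr ⟨Pi.single i 1, by simpa [single_one_vecMul] using hi⟩
  have hcol (r : m → R) (hr : r ᵥ* M ≠ 0) :
      AddMonoidHom.mk' (r ᵥ* M ⬝ᵥ ·) (dotProduct_add _) ≠ 0 := by
    obtain ⟨j, hj⟩ := Function.ne_iff.mp hr
    exact DFunLike.ne_iff.mpr ⟨Pi.single j 1, by simpa [dotProduct_single] using hj⟩
  calc (1 : ℝ) / 4 = 1 / 2 * (1 / 2) := by norm_num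
    _ ≤ _ := mul_le_prob_prod (half_le_prob_ne_zero _ hrow) (by norm_num)
        fun r hr => half_le_prob_ne_zero _ (hcol r hr)

theorem tensor_test_soundness_general {c : ℕ}
    (u : Fin c → ZMod 2) (W : Matrix (Fin c) (Fin c) (ZMod 2))
    (hW : W ≠ Matrix.vecMulVec u u) :
    prob (fun x : (Fin c → ZMod 2) × (Fin c → ZMod 2) =>
        (∑ i, ∑ j, x.1 i * W i j * x.2 j)
          ≠ (∑ i, x.1 i * u i) * (∑ j, x.2 j * u j))
      ≥ 1 / 4 := by
  have hform (r r' : Fin c → ZMod 2) : r ᵥ* (W - vecMulVec u u) ⬝ᵥ r' =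
      (∑ i, ∑ j, r i * W i j * r' j) - (∑ i, r i * u i) * (∑ j, r' j * u j) := by
    rw [vecMul_sub, sub_dotProduct, vecMul_vecMulVec, smul_dotProduct, smul_eq_mul,
      dotProduct_comm u r']
    simp only [dotProduct, vecMul, sum_mul]
    rw [sum_comm]
  have key := quarter_le_prob_vecMul_dotProduct_ne_zero (sub_ne_zero.mpr hW)
  simpa only [hform, sub_ne_zero] using key

/-- **Tensor-test soundness** (used for test (P6) in Lemma 5.3): if
`W ∈ F₂^{c×c}` differs from the outer product `u·uᵀ`, then independent
uniformly random `r, r' ∈ F₂^c` satisfy `rᵀ W r' ≠ (rᵀu)·(r'ᵀu)` with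
probability at least `1/4`. -/
theorem tensor_test_soundness {c : ℕ} (hc : 1 ≤ c)
    (u : Fin c → ZMod 2) (W : Matrix (Fin c) (Fin c) (ZMod 2))
    (hW : W ≠ Matrix.vecMulVec u u) :
    prob (fun x : (Fin c → ZMod 2) × (Fin c → ZMod 2) =>
        (∑ i, ∑ j, x.1 i * W i j * x.2 j)
          ≠ (∑ i, x.1 i * u i) * (∑ j, x.2 j * u j))
      ≥ 1 / 4 :=
  tensor_test_soundness_general u W hW
end

section
/- Let d, c, N ≥ 1 and let κ : Fin d → Fin N. Let ū : Fin d → Fin N → (Fin c → F_2) be given (ū(j)(i) is the block-i part of the j-th coordinate). Suppose there exist j0 ∈ Fin d and ℓ ∈ Fin N with ℓ ≠ κ(j0) and ū(j0)(ℓ) ≠ 0. Draw a uniformly random subset T ⊆ Fin N and, independently for each i ∈ Fin N, a uniformly random α_i ∈ F_2^c. Then, with probability at least 1/8, there exists j ∈ Fin d such that κ(j) ∉ T and Σ_{i∈T} ⟨α_i, ū(j)(i)⟩ ≠ 0. -/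
open scoped Classical

/-- The number of elements of a finite type satisfying a predicate
(with classical decidability, to avoid instance mismatches). -/
noncomputable def cnt {V : Type*} [Fintype V] (P : V → Prop) : ℕ :=
  (Finset.univ.filter P).card

lemma cnt_congr {V : Type*} [Fintype V] {P Q : V → Prop} (h : ∀ x, P x ↔ Q x) :
    cnt P = cnt Q := by
  unfold cnt
  congr 1
  exact Finset.filter_congr fun x _ => h x

lemma cnt_le_cnt {V : Type*} [Fintype V] {P Q : V → Prop} (h : ∀ x, P x → Q x) :
    cnt P ≤ cnt Q := by
  unfold cnt
  apply Finset.card_le_card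
  intro x hx
  simp only [Finset.mem_filter, Finset.mem_univ, true_and] at hx ⊢
  exact h x hx

lemma cnt_true {V : Type*} [Fintype V] : cnt (fun _ : V => True) = Fintype.card V := by
  unfold cnt
  rw [Finset.filter_true, Finset.card_univ]

/-- A "toggle" lemma: if `e` is an involution that flips `P` and preserves `Q`,
then exactly half of the elements satisfying `Q` also satisfy `P`. -/
lemma cnt_toggle {V : Type*} [Fintype V] (P Q : V → Prop)
    (e : V → V) (he : ∀ x, e (e x) = x)
    (hP : ∀ x, P (e x) ↔ ¬ P x) (hQ : ∀ x, Q (e x) ↔ Q x) :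
    cnt (fun x => P x ∧ Q x) * 2 = cnt Q := by
  have h1 : cnt (fun x => P x ∧ Q x) = cnt (fun x => ¬ P x ∧ Q x) := by
    unfold cnt
    apply Finset.card_nbij' e e
    · intro a ha
      simp only [Finset.mem_coe, Finset.mem_filter, Finset.mem_univ, true_and] at ha ⊢
      exact ⟨fun h => (hP a).mp h ha.1, (hQ a).mpr ha.2⟩
    · intro a ha
      simp only [Finset.mem_coe, Finset.mem_filter, Finset.mem_univ, true_and] at ha ⊢
      exact ⟨(hP a).mpr ha.1, (hQ a).mpr ha.2⟩
    · intro a _; exact he a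
    · intro a _; exact he a
  have h2 : cnt (fun x => P x ∧ Q x) + cnt (fun x => ¬ P x ∧ Q x) = cnt Q := by
    unfold cnt
    rw [← Finset.card_union_of_disjoint]
    · congr 1
      ext a
      simp only [Finset.mem_union, Finset.mem_filter, Finset.mem_univ, true_and]
      tauto
    · rw [Finset.disjoint_left]
      intro a ha hb
      simp only [Finset.mem_filter, Finset.mem_univ, true_and] at ha hb
      exact hb.1 ha.1
  omega

/-- Toggling membership of `a` in a finset. -/
noncomputable def tog {β : Type*} [DecidableEq β] (a : β) (T : Finset β) : Finset β :=
  if a ∈ T then T.erase a else insert a T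

lemma tog_tog {β : Type*} [DecidableEq β] (a : β) (T : Finset β) : tog a (tog a T) = T := by
  unfold tog
  by_cases h : a ∈ T
  · simp [h, Finset.insert_erase h]
  · simp [h, Finset.erase_insert h]

lemma mem_tog_self {β : Type*} [DecidableEq β] (a : β) (T : Finset β) :
    a ∈ tog a T ↔ a ∉ T := by
  unfold tog
  by_cases h : a ∈ T <;> simp [h]

lemma mem_tog_other {β : Type*} [DecidableEq β] {a b : β} (h : b ≠ a) (T : Finset β) :
    b ∈ tog a T ↔ b ∈ T := by
  unfold tog
  by_cases ha : a ∈ T <;> simp [ha, h]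

lemma zmod2_ne_zero {a : ZMod 2} (h : a ≠ 0) : a = 1 := by
  revert h; revert a; decide

/-- **Zero-test soundness** (tests (P4)/(P5) in Lemma 5.3): if some coordinate
`j0` of the auxiliary proof `ū` has a nonzero entry in a block `ℓ ≠ κ(j0)`,
then for a uniformly random subset `T ⊆ Fin N` and independent uniformly
random vectors `α_i ∈ F₂^c`, with probability at least `1/8` there is a
coordinate `j` with `κ(j) ∉ T` whose decoded value `∑_{i∈T} ⟨α_i, ū(j)(i)⟩`
is nonzero (so the zero test rejects). -/
theorem zero_test_soundness {d c N : ℕ} (hd : 1 ≤ d) (hc : 1 ≤ c) (hN : 1 ≤ N)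
    (κ : Fin d → Fin N) (ubar : Fin d → Fin N → Fin c → ZMod 2)
    (hbad : ∃ (j0 : Fin d) (l : Fin N), l ≠ κ j0 ∧ ubar j0 l ≠ 0) :
    prob (fun x : Finset (Fin N) × (Fin N → Fin c → ZMod 2) =>
        ∃ j : Fin d, κ j ∉ x.1 ∧ (∑ i ∈ x.1, ∑ s, x.2 i s * ubar j i s) ≠ 0)
      ≥ 1 / 8 := by
  obtain ⟨j0, l, hl, hu⟩ := hbad
  obtain ⟨s0, hs0⟩ := Function.ne_iff.mp hu
  set Ω := Finset (Fin N) × (Fin N → Fin c → ZMod 2)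
  set E : Ω → Prop := fun x =>
    ∃ j : Fin d, κ j ∉ x.1 ∧ (∑ i ∈ x.1, ∑ s, x.2 i s * ubar j i s) ≠ 0 with hE
  -- the linear functional on the α's, for a fixed T
  set φ : Finset (Fin N) → (Fin N → Fin c → ZMod 2) → ZMod 2 :=
    fun T α => ∑ i ∈ T, ∑ s, α i s * ubar j0 i s with hφ
  set S : Ω → Prop := fun x => l ∈ x.1 ∧ κ j0 ∉ x.1 ∧ φ x.1 x.2 ≠ 0 with hS
  -- S implies E
  have hSE : ∀ x : Ω, S x → E x := fun x hx => ⟨j0, hx.2.1, hx.2.2⟩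
  -- Step 1 : counting good T's
  have hT4 : cnt (fun T : Finset (Fin N) => l ∈ T ∧ κ j0 ∉ T) * 4
      = Fintype.card (Finset (Fin N)) := by
    have h1 := cnt_toggle (fun T : Finset (Fin N) => l ∈ T)
      (fun T => κ j0 ∉ T) (tog l) (tog_tog l)
      (fun T => by simpa using mem_tog_self l T)
      (fun T => by simpa using not_congr (mem_tog_other (Ne.symm hl) T))
    have h2 := cnt_toggle (fun T : Finset (Fin N) => κ j0 ∉ T)
      (fun _ => True) (tog (κ j0)) (tog_tog (κ j0))
      (fun T => by simpa using not_congr (mem_tog_self (κ j0) T))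
      (fun T => Iff.rfl)
    have h2' : cnt (fun T : Finset (Fin N) => κ j0 ∉ T) * 2
        = Fintype.card (Finset (Fin N)) := by
      rw [← cnt_true (V := Finset (Fin N)), ← h2]
      congr 1
      exact cnt_congr fun T => by tauto
    calc cnt (fun T : Finset (Fin N) => l ∈ T ∧ κ j0 ∉ T) * 4
        = (cnt (fun T : Finset (Fin N) => l ∈ T ∧ κ j0 ∉ T) * 2) * 2 := by ring
      _ = cnt (fun T : Finset (Fin N) => κ j0 ∉ T) * 2 := by rw [h1]
      _ = Fintype.card (Finset (Fin N)) := h2'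
  -- Step 2 : for each T containing l, half the α's give a nonzero value
  have hhalf : ∀ T : Finset (Fin N), l ∈ T →
      cnt (fun α : Fin N → Fin c → ZMod 2 => φ T α ≠ 0) * 2
        = Fintype.card (Fin N → Fin c → ZMod 2) := by
    intro T hlT
    set v0 : Fin N → Fin c → ZMod 2 :=
      fun i s => if i = l then (if s = s0 then 1 else 0) else 0 with hv0
    have hφv0 : φ T v0 = 1 := by
      show (∑ i ∈ T, ∑ s, v0 i s * ubar j0 i s) = 1
      rw [Finset.sum_eq_single_of_mem l hlT]
      · have hx : ∀ s : Fin c, v0 l s * ubar j0 l s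
            = if s = s0 then ubar j0 l s else 0 := by
          intro s
          by_cases h : s = s0 <;> simp [hv0, h]
        rw [Finset.sum_congr rfl fun s _ => hx s]
        rw [Finset.sum_ite_eq' Finset.univ s0 (fun s => ubar j0 l s)]
        simp [zmod2_ne_zero hs0]
      · intro i _ hi
        have hx : ∀ s : Fin c, v0 i s * ubar j0 i s = 0 := by
          intro s; simp [hv0, hi]
        rw [Finset.sum_congr rfl fun s _ => hx s]
        simp
    have hadd : ∀ α, φ T (α + v0) = φ T α + 1 := by
      intro α
      have hx : φ T (α + v0) = φ T α + φ T v0 := by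
        show (∑ i ∈ T, ∑ s, (α + v0) i s * ubar j0 i s)
          = (∑ i ∈ T, ∑ s, α i s * ubar j0 i s) + (∑ i ∈ T, ∑ s, v0 i s * ubar j0 i s)
        simp only [Pi.add_apply, add_mul]
        rw [← Finset.sum_add_distrib]
        refine Finset.sum_congr rfl fun i _ => ?_
        rw [← Finset.sum_add_distrib]
      rw [hx, hφv0]
    have hinv : ∀ α, (α + v0) + v0 = α := by
      intro α
      rw [add_assoc]
      have hx : v0 + v0 = 0 := by
        funext i s
        have : ∀ a : ZMod 2, a + a = 0 := by decide
        exact this _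
      rw [hx, add_zero]
    have hres := cnt_toggle (fun α : Fin N → Fin c → ZMod 2 => φ T α ≠ 0)
      (fun _ => True) (fun α => α + v0) hinv
      (fun α => by
        show (φ T (α + v0) ≠ 0) ↔ ¬ (φ T α ≠ 0)
        rw [hadd α]
        constructor
        · intro h hne
          have h1 : φ T α = 1 := zmod2_ne_zero hne
          rw [h1] at h
          exact h (by decide)
        · intro h
          simp only [not_not] at h
          rw [h]
          decide)
      (fun _ => Iff.rfl)
    rw [← cnt_true (V := Fin N → Fin c → ZMod 2), ← hres]
    congr 1
    exact cnt_congr fun α => by tauto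
  -- Step 3 : fiberwise decomposition for the count of S
  have hfib : cnt S
      = ∑ T : Finset (Fin N), cnt (fun α : Fin N → Fin c → ZMod 2 => S (T, α)) := by
    unfold cnt
    rw [Finset.card_eq_sum_card_fiberwise
      (f := fun x : Ω => x.1) (t := Finset.univ) (fun x _ => Finset.mem_univ _)]
    refine Finset.sum_congr rfl fun T _ => ?_
    apply Finset.card_nbij' (fun x : Ω => x.2) (fun α => (T, α))
    · intro a ha
      simp only [Finset.mem_coe, Finset.mem_filter, Finset.mem_univ, true_and] at ha ⊢
      obtain ⟨h1, h2⟩ := ha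
      rw [← h2]
      exact h1
    · intro α hα
      simp only [Finset.mem_coe, Finset.mem_filter, Finset.mem_univ, true_and] at hα ⊢
      exact ⟨hα, trivial⟩
    · intro a ha
      simp only [Finset.mem_coe, Finset.mem_filter, Finset.mem_univ, true_and] at ha
      rw [← ha.2]
    · intro α _; rfl
  -- Step 4 : lower bound the count of S
  set M := Fintype.card (Fin N → Fin c → ZMod 2) with hM
  have hScount : cnt S * 2 ≥ cnt (fun T : Finset (Fin N) => l ∈ T ∧ κ j0 ∉ T) * M := by
    rw [hfib, Finset.sum_mul]
    have key : ∀ T : Finset (Fin N), l ∈ T ∧ κ j0 ∉ T →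
        cnt (fun α : Fin N → Fin c → ZMod 2 => S (T, α)) * 2 = M := by
      intro T hT
      have heq : cnt (fun α : Fin N → Fin c → ZMod 2 => S (T, α))
          = cnt (fun α : Fin N → Fin c → ZMod 2 => φ T α ≠ 0) := by
        apply cnt_congr
        intro α
        simp only [hS]
        constructor
        · intro h; exact h.2.2
        · intro h; exact ⟨hT.1, hT.2, h⟩
      rw [heq, hhalf T hT.1]
    calc cnt (fun T : Finset (Fin N) => l ∈ T ∧ κ j0 ∉ T) * M
        = ∑ T ∈ Finset.univ.filter (fun T : Finset (Fin N) => l ∈ T ∧ κ j0 ∉ T), M := by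
          unfold cnt
          rw [Finset.sum_const, smul_eq_mul]
          congr 1
          congr 1
          ext a
          simp only [Finset.mem_filter]
      _ = ∑ T ∈ Finset.univ.filter (fun T : Finset (Fin N) => l ∈ T ∧ κ j0 ∉ T),
            cnt (fun α : Fin N → Fin c → ZMod 2 => S (T, α)) * 2 := by
          refine Finset.sum_congr rfl fun T hT => ?_
          simp only [Finset.mem_filter, Finset.mem_univ, true_and] at hT
          exact (key T hT).symm
      _ ≤ ∑ T : Finset (Fin N),
            cnt (fun α : Fin N → Fin c → ZMod 2 => S (T, α)) * 2 :=
          Finset.sum_le_sum_of_subset (Finset.filter_subset _ _)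
  -- Step 5 : combine
  have hcardΩ : Fintype.card Ω = Fintype.card (Finset (Fin N)) * M := by
    rw [hM]; exact Fintype.card_prod _ _
  have hkey : cnt E * 8 ≥ Fintype.card Ω := by
    have hEcard : cnt S ≤ cnt E := cnt_le_cnt hSE
    calc Fintype.card Ω = Fintype.card (Finset (Fin N)) * M := hcardΩ
      _ = (cnt (fun T : Finset (Fin N) => l ∈ T ∧ κ j0 ∉ T) * 4) * M := by rw [hT4]
      _ = (cnt (fun T : Finset (Fin N) => l ∈ T ∧ κ j0 ∉ T) * M) * 4 := by ring
      _ ≤ (cnt S * 2) * 4 := mul_le_mul_left hScount 4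
      _ = cnt S * 8 := by ring
      _ ≤ cnt E * 8 := mul_le_mul_left hEcard 8
  -- conclude
  have hprob : prob E = (cnt E : ℝ) / (Fintype.card Ω : ℝ) := rfl
  rw [hprob]
  have hΩpos : (0 : ℝ) < (Fintype.card Ω : ℝ) := by
    exact_mod_cast Fintype.card_pos
  rw [ge_iff_le, div_le_div_iff₀ (by norm_num) hΩpos]
  have h8 : (Fintype.card Ω : ℝ) ≤ (cnt E : ℝ) * 8 := by exact_mod_cast hkey
  calc (1 : ℝ) * (Fintype.card Ω : ℝ) = (Fintype.card Ω : ℝ) := one_mul _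
    _ ≤ (cnt E : ℝ) * 8 := h8
end

section
/- Let t, k ≥ 1 and let a, b : Fin k → (Fin t → F_2) be two distinct tuples of vectors in F_2^t. Draw a uniformly random γ ∈ F_2^t (defining the linear functional ψ(x) = ⟨γ, x⟩ on F_2^t) and, independently, a uniformly random subset S ⊆ Fin k. Then Pr[Σ_{i∈S} ψ(a_i) ≠ Σ_{i∈S} ψ(b_i)] ≥ 1/4. -/
open scoped Classical

lemma prob_eq {Ω : Type*} [Fintype Ω] (P : Ω → Prop) [DecidablePred P] :
    prob P = ((Finset.univ.filter P).card : ℝ) / (Fintype.card Ω : ℝ) := by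
  unfold prob
  rw [Finset.filter_congr_decidable]

/-- If an involution flips a `ZMod 2`-valued function, the nonzero and zero
fibers have equal cardinality. -/
lemma flip_card {α : Type*} [Fintype α] (f : α → ZMod 2) (g : α → α)
    (hg : ∀ x, g (g x) = x) (hf : ∀ x, f (g x) = f x + 1) :
    (Finset.univ.filter (fun x => f x ≠ 0)).card =
      (Finset.univ.filter (fun x => f x = 0)).card := by
  apply Finset.card_bij (fun x _ => g x)
  · intro x hx
    simp only [Finset.mem_filter, Finset.mem_univ, true_and] at hx ⊢
    rw [hf]
    have : f x = 1 := by revert hx; generalize f x = y; revert y; decide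
    rw [this]; decide
  · intro x hx y hy hxy
    have := congrArg g hxy
    rwa [hg, hg] at this
  · intro y hy
    simp only [Finset.mem_filter, Finset.mem_univ, true_and] at hy ⊢
    refine ⟨g y, ?_, (hg y)⟩
    rw [hf, hy]; decide

lemma flip_half {α : Type*} [Fintype α] (f : α → ZMod 2) (g : α → α)
    (hg : ∀ x, g (g x) = x) (hf : ∀ x, f (g x) = f x + 1) :
    2 * (Finset.univ.filter (fun x => f x ≠ 0)).card = Fintype.card α := by
  have h := flip_card f g hg hf
  have h2 := Finset.card_filter_add_card_filter_not
    (s := (Finset.univ : Finset α)) (p := fun x => f x = 0)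
  simp only [Finset.card_univ, ne_eq] at h h2 ⊢
  omega

/-- **Consistency-test soundness** (test (P8) in Lemma 5.3): for distinct
tuples `a, b : Fin k → F₂^t`, a uniformly random `γ ∈ F₂^t` (defining the
linear functional `ψ(x) = ⟨γ, x⟩`) and an independent uniformly random subset
`S ⊆ Fin k` satisfy `∑_{i∈S} ψ(a_i) ≠ ∑_{i∈S} ψ(b_i)` with probability at
least `1/4`. -/
theorem consistency_test_soundness {t k : ℕ} (ht : 1 ≤ t) (hk : 1 ≤ k)
    (a b : Fin k → Fin t → ZMod 2) (hab : a ≠ b) :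
    prob (fun x : (Fin t → ZMod 2) × Finset (Fin k) =>
        (∑ i ∈ x.2, ∑ s, x.1 s * a i s) ≠ (∑ i ∈ x.2, ∑ s, x.1 s * b i s))
      ≥ 1 / 4 := by
  -- pick a coordinate where a and b differ
  have : ∃ i0 s0, a i0 s0 ≠ b i0 s0 := by
    by_contra h
    push_neg at h
    exact hab (funext fun i => funext fun s => h i s)
  obtain ⟨i0, s0, hdiff⟩ := this
  set v : (Fin t → ZMod 2) → Fin k → ZMod 2 :=
    fun γ i => (∑ s, γ s * a i s) - (∑ s, γ s * b i s) with hv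
  have hvsum : ∀ γ i, v γ i = ∑ s, γ s * (a i s - b i s) := by
    intro γ i
    simp [hv, ← Finset.sum_sub_distrib, mul_sub]
  -- half of the γ's have v γ i0 ≠ 0
  have hγhalf : 2 * (Finset.univ.filter (fun γ : Fin t → ZMod 2 => v γ i0 ≠ 0)).card
      = 2 ^ t := by
    have := flip_half (fun γ : Fin t → ZMod 2 => v γ i0)
      (fun γ => Function.update γ s0 (γ s0 + 1))
      (by
        intro γ
        funext s
        by_cases h : s = s0
        · simp [Function.update, h, add_assoc, show (1 : ZMod 2) + 1 = 0 from rfl]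
        · simp [Function.update, h])
      (by
        intro γ
        simp only [hvsum]
        rw [← Finset.sum_add_sum_compl {s0}, ← Finset.sum_add_sum_compl {s0}
          (fun s => γ s * (a i0 s - b i0 s))]
        have h1 : ∀ s ∈ ({s0}ᶜ : Finset (Fin t)),
            Function.update γ s0 (γ s0 + 1) s * (a i0 s - b i0 s)
              = γ s * (a i0 s - b i0 s) := by
          intro s hs
          simp only [Finset.mem_compl, Finset.mem_singleton] at hs
          simp [Function.update, hs]
        rw [Finset.sum_congr rfl h1]
        have hc : a i0 s0 - b i0 s0 = 1 := by
          revert hdiff; generalize a i0 s0 = x; generalize b i0 s0 = y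
          revert x y; decide
        simp [Function.update, hc]
        ring)
    rw [this]
    simp [Fintype.card_fun, ZMod.card]
  -- for each good γ, half the subsets are good
  have hShalf : ∀ γ : Fin t → ZMod 2, v γ i0 ≠ 0 →
      2 * (Finset.univ.filter (fun S : Finset (Fin k) => ∑ i ∈ S, v γ i ≠ 0)).card
        = 2 ^ k := by
    intro γ hγ
    have hv1 : v γ i0 = 1 := by
      revert hγ; generalize v γ i0 = x; revert x; decide
    have := flip_half (fun S : Finset (Fin k) => ∑ i ∈ S, v γ i)
      (fun S => if i0 ∈ S then S.erase i0 else insert i0 S)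
      (by
        intro S
        by_cases h : i0 ∈ S
        · simp [h, Finset.insert_erase h]
        · simp [h, Finset.erase_insert h])
      (by
        intro S
        by_cases h : i0 ∈ S
        · simp only [h, if_true]
          have h2 : v γ i0 + ∑ x ∈ S.erase i0, v γ x = ∑ x ∈ S, v γ x :=
            Finset.add_sum_erase S (fun i => v γ i) h
          rw [← h2, hv1]
          exact (show ∀ x : ZMod 2, x = 1 + x + 1 by decide) _
        · simp only [h, if_false]
          rw [Finset.sum_insert h, hv1]
          exact add_comm _ _)
    rw [this]
    simp [Fintype.card_finset]
  -- count good pairs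
  set P : (Fin t → ZMod 2) × Finset (Fin k) → Prop :=
    fun x => (∑ i ∈ x.2, ∑ s, x.1 s * a i s) ≠ (∑ i ∈ x.2, ∑ s, x.1 s * b i s) with hP
  have hPiff : ∀ γ S, P (γ, S) ↔ ∑ i ∈ S, v γ i ≠ 0 := by
    intro γ S
    have hsum : ∑ i ∈ S, v γ i
        = (∑ i ∈ S, ∑ s, γ s * a i s) - (∑ i ∈ S, ∑ s, γ s * b i s) := by
      simp [hv, Finset.sum_sub_distrib]
    simp only [hP]
    rw [hsum, ne_eq, ne_eq, sub_eq_zero]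
  have hcount : (Finset.univ.filter P).card
      = ∑ γ : Fin t → ZMod 2,
          (Finset.univ.filter (fun S : Finset (Fin k) => ∑ i ∈ S, v γ i ≠ 0)).card := by
    rw [Finset.card_filter, Fintype.sum_prod_type]
    refine Finset.sum_congr rfl fun γ _ => ?_
    rw [Finset.card_filter]
    refine Finset.sum_congr rfl fun S _ => ?_
    by_cases h : P (γ, S)
    · rw [if_pos h, if_pos ((hPiff γ S).mp h)]
    · rw [if_neg h, if_neg (fun hh => h ((hPiff γ S).mpr hh))]
  have hk2 : 2 ^ k = 2 * 2 ^ (k - 1) := by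
    conv_lhs => rw [show k = (k - 1) + 1 by omega]
    ring
  have ht2 : 2 ^ t = 2 * 2 ^ (t - 1) := by
    conv_lhs => rw [show t = (t - 1) + 1 by omega]
    ring
  -- lower bound
  have hmain : 4 * (Finset.univ.filter P).card ≥ 2 ^ t * 2 ^ k := by
    rw [hcount]
    have hstep : ∑ γ ∈ Finset.univ.filter (fun γ : Fin t → ZMod 2 => v γ i0 ≠ 0),
            (Finset.univ.filter (fun S : Finset (Fin k) => ∑ i ∈ S, v γ i ≠ 0)).card
        ≤ ∑ γ : Fin t → ZMod 2,
            (Finset.univ.filter (fun S : Finset (Fin k) => ∑ i ∈ S, v γ i ≠ 0)).card :=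
      Finset.sum_le_sum_of_subset (Finset.filter_subset _ _)
    have hval : ∀ γ ∈ Finset.univ.filter (fun γ : Fin t → ZMod 2 => v γ i0 ≠ 0),
        (Finset.univ.filter (fun S : Finset (Fin k) => ∑ i ∈ S, v γ i ≠ 0)).card
          = 2 ^ (k - 1) := by
      intro γ hγ
      simp only [Finset.mem_filter, Finset.mem_univ, true_and] at hγ
      have := hShalf γ hγ
      omega
    rw [Finset.sum_congr rfl hval] at hstep
    simp only [Finset.sum_const, smul_eq_mul] at hstep
    have hγcard : (Finset.univ.filter (fun γ : Fin t → ZMod 2 => v γ i0 ≠ 0)).card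
        = 2 ^ (t - 1) := by omega
    rw [hγcard] at hstep
    calc 2 ^ t * 2 ^ k = 4 * (2 ^ (t - 1) * 2 ^ (k - 1)) := by
          rw [ht2, hk2]; ring
      _ ≤ 4 * ∑ γ : Fin t → ZMod 2,
          (Finset.univ.filter (fun S : Finset (Fin k) => ∑ i ∈ S, v γ i ≠ 0)).card :=
          Nat.mul_le_mul_left 4 hstep
  -- conclude
  rw [prob_eq]
  have hΩ : (Fintype.card ((Fin t → ZMod 2) × Finset (Fin k)) : ℝ)
      = 2 ^ t * 2 ^ k := by
    simp [Fintype.card_prod, Fintype.card_fun, Fintype.card_finset, ZMod.card]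
  rw [hΩ, ge_iff_le, div_le_div_iff₀ (by norm_num) (by positivity)]
  have hcast : (2 ^ t * 2 ^ k : ℝ) ≤ 4 * ((Finset.univ.filter P).card : ℝ) := by
    exact_mod_cast hmain
  linarith
end
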